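/- For all natural numbers i, Σ_{r=0}^{i} (-1)^{r} · b_{i,r,k} = (k-1)^i for any real k; in particular Σ_{r=0}^{i} (-1)^{i-r} · b_{i,r,0} = 1. -/
import Mathlib


open Finset

noncomputable def msn (i j : ℕ) (k : ℝ) : ℝ :=
  ∑ r ∈ Finset.range (j + 1), (j.choose r : ℝ) * (-1 : ℝ) ^ (j - r) * ((r : ℝ) + k) ^ i

open fwdDiff in
lemma msn_eq_fwdDiff (i j : ℕ) (k : ℝ) :
    msn i j k = (fwdDiff (1:ℝ))^[j] (fun x : ℝ => x ^ i) k := by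
  rw [fwdDiff_iter_eq_sum_shift, msn]
  refine Finset.sum_congr rfl fun r _ => ?_
  rw [zsmul_eq_mul]
  push_cast
  ring

open fwdDiff in
lemma fwdDiff_pow_eq_zero : ∀ i : ℕ, ∀ n : ℕ, i ≤ n →
    (fwdDiff (1:ℝ))^[n + 1] (fun x : ℝ => x ^ i) = 0 := by
  intro i
  induction i using Nat.strong_induction_on with
  | _ i IH =>
    intro n hn
    rcases Nat.eq_zero_or_pos i with rfl | hi
    · rw [Function.iterate_succ_apply]
      have : fwdDiff (1:ℝ) (fun x : ℝ => x ^ 0) = 0 := by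
        funext x; simp [fwdDiff]
      rw [this]
      induction n with
      | zero => simp
      | succ n ih =>
        rw [Function.iterate_succ_apply]
        have : fwdDiff (1:ℝ) (0 : ℝ → ℝ) = 0 := by funext x; simp [fwdDiff]
        rw [this, ih]; omega
    · have hn1 : 1 ≤ n := le_trans hi hn
      rw [Function.iterate_succ_apply]
      have hstep : fwdDiff (1:ℝ) (fun x : ℝ => x ^ i)
          = ∑ j ∈ Finset.range i, (fun x : ℝ => (i.choose j : ℝ) * x ^ j) := by
        funext x
        simp only [fwdDiff, Finset.sum_apply]
        rw [add_pow]
        rw [Finset.sum_range_succ]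
        simp [mul_comm]
      rw [hstep, fwdDiff_iter_finset_sum]
      funext x
      simp only [Finset.sum_apply, Pi.zero_apply]
      refine Finset.sum_eq_zero fun j hj => ?_
      have hj' : j < i := Finset.mem_range.mp hj
      have : (fun x : ℝ => (i.choose j : ℝ) * x ^ j)
          = (i.choose j : ℝ) • (fun x : ℝ => x ^ j) := by
        funext x; simp
      rw [this, fwdDiff_iter_const_smul]
      have hn' : n = (n - 1) + 1 := by omega
      rw [hn', IH j hj' (n-1) (by omega)]
      simp

open fwdDiff in
lemma telescope (g : ℝ → ℝ) (n : ℕ) (x : ℝ) :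
    ∑ r ∈ Finset.range (n + 1), (-1 : ℝ) ^ r * (fwdDiff (1:ℝ))^[r] g x
      = g (x - 1) + (-1 : ℝ) ^ n * (fwdDiff (1:ℝ))^[n + 1] g (x - 1) := by
  induction n with
  | zero =>
    simp only [Finset.sum_range_one, pow_zero, one_mul, Function.iterate_zero,
      Function.iterate_one, id_eq, zero_add, fwdDiff]
    have h : x - 1 + 1 = x := by ring
    rw [h]; ring
  | succ n ih =>
    rw [Finset.sum_range_succ, ih]
    have h1 : (fwdDiff (1:ℝ))^[n + 1 + 1] g (x - 1)
        = (fwdDiff (1:ℝ))^[n + 1] g x - (fwdDiff (1:ℝ))^[n + 1] g (x - 1) := by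
      rw [Function.iterate_succ_apply']
      simp [fwdDiff, sub_add_cancel]
    rw [h1]
    ring

open fwdDiff in
theorem stmt (i : ℕ) : (∀ k : ℝ, ∑ r ∈ Finset.range (i + 1), (-1 : ℝ) ^ r * msn i r k = (k - 1) ^ i) ∧ ∑ r ∈ Finset.range (i + 1), (-1 : ℝ) ^ (i - r) * msn i r 0 = 1 := by
  have key : ∀ k : ℝ, ∑ r ∈ Finset.range (i + 1), (-1 : ℝ) ^ r * msn i r k = (k - 1) ^ i := by
    intro k
    calc ∑ r ∈ Finset.range (i + 1), (-1 : ℝ) ^ r * msn i r k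
        = ∑ r ∈ Finset.range (i + 1),
            (-1 : ℝ) ^ r * (fwdDiff (1:ℝ))^[r] (fun x : ℝ => x ^ i) k := by
          refine Finset.sum_congr rfl fun r _ => ?_
          rw [msn_eq_fwdDiff]
      _ = (k - 1) ^ i + (-1 : ℝ) ^ i * (fwdDiff (1:ℝ))^[i + 1] (fun x : ℝ => x ^ i) (k - 1) := by
          rw [telescope]
      _ = (k - 1) ^ i := by
          rw [fwdDiff_pow_eq_zero i i le_rfl]; simp
  refine ⟨key, ?_⟩
  have h2 : ∑ r ∈ Finset.range (i + 1), (-1 : ℝ) ^ (i - r) * msn i r 0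
      = (-1 : ℝ) ^ i * ∑ r ∈ Finset.range (i + 1), (-1 : ℝ) ^ r * msn i r 0 := by
    rw [Finset.mul_sum]
    refine Finset.sum_congr rfl fun r hr => ?_
    have hr' : r ≤ i := Nat.lt_succ_iff.mp (Finset.mem_range.mp hr)
    have : (-1 : ℝ) ^ (i - r) = (-1 : ℝ) ^ i * (-1 : ℝ) ^ r := by
      rw [← pow_add, show i + r = (i - r) + 2 * r by omega, pow_add, pow_mul]
      simp
    rw [this]; ring
  rw [h2, key 0]
  rw [← mul_pow]
  norm_num
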